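/- Let A = (n, Σ, M, α, η) be an ℝ-weighted automaton. Then L_A(w) = 0 for all words w ∈ Σ* if and only if there exists a linear subspace 𝒱 ⊆ ℝ^n (of row vectors) such that α ∈ 𝒱, every v ∈ 𝒱 satisfies v η = 0, and v M(a) ∈ 𝒱 for every v ∈ 𝒱 and every a ∈ Σ. -/

import Mathlib

/-! The row vectors `α M(w)` reachable from `α` span the smallest subspace containing `α` and
closed under every `M(a)`. Since `L(w) = (α M(w)) η`, the language vanishes exactly when this
subspace lies in the hyperplane `{v | v η = 0}`; and any subspace with the three properties
contains it. -/

open Matrix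

noncomputable section

/-- The matrix `M(w)` of a word: `M(ε) = I`, `M(a₁⋯a_k) = M(a₁)⋯M(a_k)`. -/
def wordProd {S : Type*} {Γ : Type*} [Fintype S] [DecidableEq S]
    (M : Γ → Matrix S S ℝ) (w : List Γ) : Matrix S S ℝ :=
  (w.map M).prod

/-- The language of the weighted automaton `(M, α, η)`: `L(w) = α M(w) η`. -/
def WAlang {S : Type*} {Γ : Type*} [Fintype S] [DecidableEq S]
    (M : Γ → Matrix S S ℝ) (α η : S → ℝ) (w : List Γ) : ℝ :=
  α ⬝ᵥ (wordProd M w).mulVec η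

theorem dotProduct_eq_zero_of_mem_span {S : Type*} [Fintype S] {s : Set (S → ℝ)} {η : S → ℝ}
    (hs : ∀ v ∈ s, v ⬝ᵥ η = 0) {v : S → ℝ} (hv : v ∈ Submodule.span ℝ s) : v ⬝ᵥ η = 0 := by
  induction hv using Submodule.span_induction with
  | mem x hx => exact hs x hx
  | zero => exact zero_dotProduct η
  | add x y _ _ hx hy => rw [add_dotProduct, hx, hy, add_zero]
  | smul c x _ hx => rw [smul_dotProduct, hx, smul_zero]

section

variable {S Γ : Type*} [Fintype S] [DecidableEq S] (M : Γ → Matrix S S ℝ)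

@[simp]
theorem wordProd_nil : wordProd M [] = 1 := rfl

theorem wordProd_cons (a : Γ) (w : List Γ) : wordProd M (a :: w) = M a * wordProd M w := by
  simp [wordProd]

theorem wordProd_append_singleton (w : List Γ) (a : Γ) :
    wordProd M (w ++ [a]) = wordProd M w * M a := by
  simp [wordProd]

theorem WAlang_eq_vecMul_dotProduct (α η : S → ℝ) (w : List Γ) :
    WAlang M α η w = vecMul α (wordProd M w) ⬝ᵥ η :=
  dotProduct_mulVec α (wordProd M w) η

def reachableSpace (α : S → ℝ) : Submodule ℝ (S → ℝ) :=
  Submodule.span ℝ (Set.range fun w => vecMul α (wordProd M w))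

theorem mem_reachableSpace_self (α : S → ℝ) : α ∈ reachableSpace M α :=
  Submodule.subset_span ⟨[], by simp⟩

theorem vecMul_mem_reachableSpace {α v : S → ℝ} (hv : v ∈ reachableSpace M α) (a : Γ) :
    vecMul v (M a) ∈ reachableSpace M α := by
  suffices reachableSpace M α ≤ (reachableSpace M α).comap (M a).vecMulLinear from this hv
  refine Submodule.span_le.mpr ?_
  rintro _ ⟨w, rfl⟩
  exact Submodule.subset_span ⟨w ++ [a], by simp [wordProd_append_singleton, vecMul_vecMul]⟩

theorem vecMul_wordProd_mem {V : Submodule ℝ (S → ℝ)} (hV : ∀ v ∈ V, ∀ a, vecMul v (M a) ∈ V)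
    (w : List Γ) {v : S → ℝ} (hv : v ∈ V) : vecMul v (wordProd M w) ∈ V := by
  induction w generalizing v with
  | nil => simpa using hv
  | cons a w ih =>
    rw [wordProd_cons, ← vecMul_vecMul]
    exact ih (hV v hv a)

end

/-- a WA is zero iff there is a subspace `𝒱` of row vectors with
`α ∈ 𝒱`, `v η = 0` for all `v ∈ 𝒱`, and `v M(a) ∈ 𝒱` for all `v ∈ 𝒱`, `a ∈ Σ`. -/
theorem WA_zero_iff_invariant_subspace {Γ : Type*} {n : ℕ}
    (M : Γ → Matrix (Fin n) (Fin n) ℝ) (α η : Fin n → ℝ) :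
    (∀ w : List Γ, WAlang M α η w = 0) ↔
    (∃ V : Submodule ℝ (Fin n → ℝ),
      α ∈ V ∧
      (∀ v ∈ V, v ⬝ᵥ η = 0) ∧
      (∀ v ∈ V, ∀ a, Matrix.vecMul v (M a) ∈ V)) := by
  simp only [WAlang_eq_vecMul_dotProduct]
  constructor
  · intro hzero
    refine ⟨reachableSpace M α, mem_reachableSpace_self M α, fun v hv => ?_,
      fun v hv => vecMul_mem_reachableSpace M hv⟩
    refine dotProduct_eq_zero_of_mem_span ?_ hv
    rintro _ ⟨w, rfl⟩
    exact hzero w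
  · rintro ⟨V, hα, hη, hV⟩ w
    exact hη _ (vecMul_wordProd_mem M hV w hα)
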